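/- For f, g continuous on [0,T] extended by zero outside [0,T], the product of their finite Laplace transforms equals the finite Laplace transform of the convolution over the doubled interval: L_T[f](s)·L_T[g](s) = ∫₀^{2T} e^{-st} (f*g)(t) dt for all s ∈ ℂ. -/
import Mathlib

open MeasureTheory

theorem flt_convolution_double (T : ℝ) (hT : 0 < T) (f g : ℝ → ℂ)
    (hf : ContinuousOn f (Set.Icc 0 T)) (hg : ContinuousOn g (Set.Icc 0 T))
    (hf0 : ∀ t : ℝ, t ∉ Set.Icc (0:ℝ) T → f t = 0)
    (hg0 : ∀ t : ℝ, t ∉ Set.Icc (0:ℝ) T → g t = 0) (s : ℂ) :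
    (∫ t in (0:ℝ)..T, Complex.exp (-s * t) * f t) *
      (∫ t in (0:ℝ)..T, Complex.exp (-s * t) * g t) =
    ∫ t in (0:ℝ)..(2 * T), Complex.exp (-s * t) * ∫ τ in (0:ℝ)..t, f τ * g (t - τ) := by
  set F : ℝ → ℂ := fun t => Complex.exp (-s * t) * f t with hFdef
  set G : ℝ → ℂ := fun t => Complex.exp (-s * t) * g t with hGdef
  have hexp : Continuous fun t : ℝ => Complex.exp (-s * t) :=
    Complex.continuous_exp.comp (continuous_const.mul Complex.continuous_ofReal)
  have hF0 : ∀ t, t ∉ Set.Icc (0:ℝ) T → F t = 0 := fun t ht => by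
    simp [hFdef, hf0 t ht]
  have hG0 : ∀ t, t ∉ Set.Icc (0:ℝ) T → G t = 0 := fun t ht => by
    simp [hGdef, hg0 t ht]
  have hFc : ContinuousOn F (Set.Icc 0 T) := hexp.continuousOn.mul hf
  have hGc : ContinuousOn G (Set.Icc 0 T) := hexp.continuousOn.mul hg
  have hind : ∀ (H : ℝ → ℂ), (∀ t, t ∉ Set.Icc (0:ℝ) T → H t = 0) →
      H = (Set.Icc (0:ℝ) T).indicator H := by
    intro H h0; funext t
    by_cases ht : t ∈ Set.Icc (0:ℝ) T
    · simp [Set.indicator_of_mem ht]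
    · simp [Set.indicator_of_notMem ht, h0 t ht]
  have hFi : Integrable F := by
    rw [hind F hF0]
    exact (hFc.integrableOn_compact isCompact_Icc).integrable_indicator measurableSet_Icc
  have hGi : Integrable G := by
    rw [hind G hG0]
    exact (hGc.integrableOn_compact isCompact_Icc).integrable_indicator measurableSet_Icc
  -- interval integrals equal full integrals
  have hfull : ∀ (H : ℝ → ℂ), (∀ t, t ∉ Set.Icc (0:ℝ) T → H t = 0) →
      ∫ t in (0:ℝ)..T, H t = ∫ t, H t := by
    intro H h0
    rw [intervalIntegral.integral_of_le hT.le, ← integral_Icc_eq_integral_Ioc]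
    exact setIntegral_eq_integral_of_forall_compl_eq_zero h0
  -- convolution identity
  have conv := integral_convolution (L := ContinuousLinearMap.mul ℝ ℂ) hFi hGi
  simp only [ContinuousLinearMap.mul_apply'] at conv
  rw [hfull F hF0, hfull G hG0, ← conv]
  -- pointwise value of convolution
  have hconv : ∀ t : ℝ, (convolution F G (ContinuousLinearMap.mul ℝ ℂ) volume) t =
      Complex.exp (-s * t) * ∫ τ in (0:ℝ)..t, f τ * g (t - τ) := by
    intro t
    rw [convolution_def]
    simp only [ContinuousLinearMap.mul_apply']
    have h1 : ∀ τ : ℝ, F τ * G (t - τ) = Complex.exp (-s * t) * (f τ * g (t - τ)) := by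
      intro τ
      simp only [hFdef, hGdef]
      rw [mul_mul_mul_comm, ← Complex.exp_add]
      have : -s * (τ:ℂ) + -s * ((t - τ : ℝ) : ℂ) = -s * (t:ℂ) := by push_cast; ring
      rw [this]
    simp_rw [h1]
    rw [MeasureTheory.integral_const_mul]
    congr 1
    by_cases ht : 0 ≤ t
    · rw [intervalIntegral.integral_of_le ht, ← integral_Icc_eq_integral_Ioc]
      refine (setIntegral_eq_integral_of_forall_compl_eq_zero ?_).symm
      intro τ hτ
      rw [Set.mem_Icc, not_and_or, not_le, not_le] at hτ
      rcases hτ with h | h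
      · rw [hf0 τ (by rw [Set.mem_Icc, not_and_or, not_le]; exact Or.inl h), zero_mul]
      · rw [hg0 (t - τ) (by rw [Set.mem_Icc, not_and_or, not_le]; left; linarith), mul_zero]
    · have hz : ∀ τ : ℝ, f τ * g (t - τ) = 0 := by
        intro τ
        by_cases hτ : 0 ≤ τ
        · rw [hg0 (t - τ) (by simp [Set.mem_Icc]; intro h'; linarith), mul_zero]
        · rw [hf0 τ (by simp [Set.mem_Icc]; intro h'; exact absurd h' hτ), zero_mul]
      simp [hz]
  -- restrict full integral to [0, 2T]
  rw [intervalIntegral.integral_of_le (by linarith : (0:ℝ) ≤ 2 * T),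
      ← integral_Icc_eq_integral_Ioc]
  have hzero : ∀ t : ℝ, t ∉ Set.Icc (0:ℝ) (2*T) →
      Complex.exp (-s * t) * (∫ τ in (0:ℝ)..t, f τ * g (t - τ)) = 0 := by
    intro t ht
    rw [Set.mem_Icc, not_and_or, not_le, not_le] at ht
    rcases ht with h | h
    · have hz : ∀ τ : ℝ, f τ * g (t - τ) = 0 := by
        intro τ
        by_cases hτ : 0 ≤ τ
        · rw [hg0 (t - τ) (by rw [Set.mem_Icc, not_and_or, not_le]; left; linarith), mul_zero]
        · rw [hf0 τ (by rw [Set.mem_Icc, not_and_or, not_le]; left; linarith), zero_mul]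
      simp [hz]
    · have hz : ∀ τ : ℝ, f τ * g (t - τ) = 0 := by
        intro τ
        by_cases hτ : τ ≤ T
        · rw [hg0 (t - τ) (by rw [Set.mem_Icc, not_and_or, not_le]; right; linarith), mul_zero]
        · rw [hf0 τ (by rw [Set.mem_Icc, not_and_or, not_le]; right; linarith), zero_mul]
      simp [hz]
  rw [setIntegral_eq_integral_of_forall_compl_eq_zero hzero]
  exact integral_congr_ae (Filter.Eventually.of_forall fun t => hconv t)
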